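/- arXiv:1703.10076 — 6 statements merged into one kernel-verified Lean document; each statement's English description precedes it below -/
import Mathlib

section
/- Let A be a group, F : A ≃* A a group automorphism, and g ∈ A. For T ∈ ℕ define ξ(T) = g · F(g) · F²(g) · ⋯ · F^{T−1}(g) (so ξ(0) = 1, ξ(T+1) = ξ(T) · F^T(g)). Assume there exists a positive integer T with ξ(T) = 1, and let T_g be the least such positive integer. Let c_g be the least positive integer c such that F^c(ξ(c)) = ξ(c) (such c exists, since c = T_g works). Set G = ξ(c_g). Then G has finite order, c_g divides T_g, and T_g = c_g · orderOf(G). -/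
/-!
In the semidirect product `A ⋊ ⟨F⟩` one has `(g, F) ^ n = (ξ n, F ^ n)`, which gives the cocycle
rule `ξ (a + b) = ξ a * F^a (ξ b)`. Put `c = c_g`, `G = ξ c` and `T = T_g`. Since `F^c` fixes `G`,
`ξ (c * k) = G ^ k`; since `ξ T = 1`, `F^T` fixes every `ξ a`. Writing `T = c * q + r`, the identity
`1 = ξ T = G ^ q * F^(c q) (ξ r)` forces `ξ r = (G ^ q)⁻¹`, which is fixed by `F^r`; minimality of `c`
then gives `r = 0`. Hence `T = c * q` with `G ^ q = 1`, and minimality of `T` gives `q = orderOf G`.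
-/

namespace MulAut

variable {M : Type*}

section Monoid

variable [Monoid M] (F : MulAut M) (g : M)

def twistedPow : ℕ → M
  | 0 => 1
  | n + 1 => twistedPow n * (F ^ n) g

@[simp]
lemma twistedPow_zero : twistedPow F g 0 = 1 := rfl

lemma twistedPow_succ (n : ℕ) : twistedPow F g (n + 1) = twistedPow F g n * (F ^ n) g := rfl

lemma twistedPow_add (a b : ℕ) :
    twistedPow F g (a + b) = twistedPow F g a * (F ^ a) (twistedPow F g b) := by
  induction b with
  | zero => simp
  | succ b ih =>
    rw [← add_assoc, twistedPow_succ, ih, twistedPow_succ, map_mul, mul_assoc, pow_add,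
      mul_apply]

lemma pow_mul_apply_eq_of_pow_apply_eq {c : ℕ} {x : M} (hx : (F ^ c) x = x) (k : ℕ) :
    (F ^ (c * k)) x = x := by
  induction k with
  | zero => simp
  | succ k ih => rw [mul_add_one, pow_add, mul_apply, hx, ih]

variable {F g}

lemma twistedPow_mul_of_fixed {c : ℕ} (hc : (F ^ c) (twistedPow F g c) = twistedPow F g c)
    (k : ℕ) : twistedPow F g (c * k) = twistedPow F g c ^ k := by
  induction k with
  | zero => simp
  | succ k ih =>
    rw [mul_add_one, twistedPow_add, ih, pow_mul_apply_eq_of_pow_apply_eq F hc, pow_succ]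

lemma pow_apply_twistedPow_of_eq_one {T : ℕ} (hT : twistedPow F g T = 1) (a : ℕ) :
    (F ^ T) (twistedPow F g a) = twistedPow F g a := by
  have h := twistedPow_add F g T a
  rwa [add_comm, twistedPow_add, hT, one_mul, map_one, mul_one, eq_comm] at h

end Monoid

variable [Group M] {F : MulAut M} {g : M}

lemma pow_mod_apply_twistedPow_mod {T c : ℕ} (hT : twistedPow F g T = 1)
    (hc : (F ^ c) (twistedPow F g c) = twistedPow F g c) :
    (F ^ (T % c)) (twistedPow F g (T % c)) = twistedPow F g (T % c) := by
  set G := twistedPow F g c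
  set q := T / c
  set r := T % c
  have hTqr : T = c * q + r := (Nat.div_add_mod T c).symm
  have hGq : (F ^ (c * q)) (G ^ q)⁻¹ = (G ^ q)⁻¹ := by
    rw [map_inv, map_pow, pow_mul_apply_eq_of_pow_apply_eq F hc]
  have hr : twistedPow F g r = (G ^ q)⁻¹ := by
    have h := hT
    rw [hTqr, twistedPow_add, twistedPow_mul_of_fixed hc, mul_eq_one_iff_eq_inv',
      ← hGq] at h
    exact (F ^ (c * q)).injective h
  have hFr : (F ^ r) G = G := by
    have h := pow_apply_twistedPow_of_eq_one hT c
    rwa [hTqr, add_comm, pow_add, mul_apply, pow_mul_apply_eq_of_pow_apply_eq F hc] at h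
  rw [hr, map_inv, map_pow, hFr]

end MulAut

/-- Lemma 3.8 (group-cohomological content): for a group `A`, an automorphism `F`,
`g : A`, and the "cocycle" `ξ T = g · F(g) · ⋯ · F^{T-1}(g)`, if `T_g` is the least
positive integer with `ξ T_g = 1` and `c_g` is the least positive integer `c` with
`F^c (ξ c) = ξ c`, then `G = ξ c_g` has finite order, `c_g ∣ T_g`, and
`T_g = c_g · orderOf G`. -/
theorem stmt0 {A : Type*} [Group A] (F : A ≃* A) (g : A)
    (ξ : ℕ → A) (hξ0 : ξ 0 = 1) (hξs : ∀ T : ℕ, ξ (T + 1) = ξ T * (F ^ T) g)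
    (Tg : ℕ) (hTg_pos : 0 < Tg) (hTg_one : ξ Tg = 1)
    (hTg_min : ∀ T : ℕ, 0 < T → ξ T = 1 → Tg ≤ T)
    (cg : ℕ) (hcg_pos : 0 < cg) (hcg_fix : (F ^ cg) (ξ cg) = ξ cg)
    (hcg_min : ∀ c : ℕ, 0 < c → (F ^ c) (ξ c) = ξ c → cg ≤ c)
    (G : A) (hG : G = ξ cg) :
    IsOfFinOrder G ∧ cg ∣ Tg ∧ Tg = cg * orderOf G := by
  obtain rfl : ξ = MulAut.twistedPow F g := funext fun n => by
    induction n with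
    | zero => exact hξ0
    | succ n ih => rw [hξs, ih, MulAut.twistedPow_succ]
  subst hG
  have hdvd : cg ∣ Tg := by
    by_contra h
    have hr_pos : 0 < Tg % cg := Nat.pos_of_ne_zero (mt Nat.dvd_of_mod_eq_zero h)
    exact (Nat.mod_lt Tg hcg_pos).not_ge
      (hcg_min _ hr_pos (MulAut.pow_mod_apply_twistedPow_mod hTg_one hcg_fix))
  obtain ⟨q, rfl⟩ := hdvd
  have hpow := MulAut.twistedPow_mul_of_fixed hcg_fix
  have hq : MulAut.twistedPow F g cg ^ q = 1 := by rw [← hpow, hTg_one]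
  have hq_pos : 0 < q := Nat.pos_of_mul_pos_left hTg_pos
  have hfin : IsOfFinOrder (MulAut.twistedPow F g cg) :=
    isOfFinOrder_iff_pow_eq_one.mpr ⟨q, hq_pos, hq⟩
  refine ⟨hfin, dvd_mul_right _ _, le_antisymm ?_ ?_⟩
  · exact hTg_min _ (mul_pos hcg_pos hfin.orderOf_pos) (by rw [hpow, pow_orderOf_eq_one])
  · exact Nat.mul_le_mul_left _ (Nat.le_of_dvd hq_pos (orderOf_dvd_of_pow_eq_one hq))
end

section
/- Let g be a positive integer and z : Fin g → ℂ a family of complex numbers each of finite multiplicative order (roots of unity); set e i = padicValNat 2 (orderOf (z i)). Let T be a positive integer and λ : Fin g → ℂ with (λ i)^T = 1 for all i, and set w i = λ i * z i. If padicValNat 2 T < e i for every i, then padicValNat 2 (orderOf (w i)) = e i for all i. -/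
/-!
Multiplying `z` by a root of unity `λ` whose order has smaller `2`-adic valuation cannot change
the `2`-part of the order: `ord(λz)` divides `lcm(ord λ, ord z)` and `ord z` divides
`lcm(ord λ, ord(λz))`, and `ν₂` of an lcm is the maximum of the valuations, so the larger
valuation `ν₂(ord z)` is forced on `ord(λz)`. The twist hypothesis `λ^T = 1` gives
`ν₂(ord λ) ≤ ν₂ T`.
-/

theorem padicValNat_le_of_dvd {p a b : ℕ} [Fact p.Prime] (hb : b ≠ 0) (hab : a ∣ b) :
    padicValNat p a ≤ padicValNat p b :=
  (padicValNat_dvd_iff_le hb).1 (pow_padicValNat_dvd.trans hab)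

theorem padicValNat_lcm {p a b : ℕ} [hp : Fact p.Prime] (ha : a ≠ 0) (hb : b ≠ 0) :
    padicValNat p (a.lcm b) = max (padicValNat p a) (padicValNat p b) := by
  rw [← Nat.factorization_def _ hp.out, Nat.factorization_lcm ha hb, Finsupp.sup_apply,
    Nat.factorization_def _ hp.out, Nat.factorization_def _ hp.out]

theorem Commute.padicValNat_orderOf_mul_eq_right {M : Type*} [Monoid M] {x y : M}
    (h : Commute x y) {p : ℕ} [Fact p.Prime] (hx : IsOfFinOrder x)
    (hlt : padicValNat p (orderOf x) < padicValNat p (orderOf y)) :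
    padicValNat p (orderOf (x * y)) = padicValNat p (orderOf y) := by
  have hy : IsOfFinOrder y := by
    rw [← orderOf_pos_iff, Nat.pos_iff_ne_zero]
    rintro hy0
    simp [hy0] at hlt
  have hx0 := hx.orderOf_pos.ne'
  have hy0 := hy.orderOf_pos.ne'
  have hxy0 := (h.isOfFinOrder_mul hx hy).orderOf_pos.ne'
  have hle : padicValNat p (orderOf (x * y)) ≤ max (padicValNat p (orderOf x)) _ :=
    padicValNat_lcm (p := p) hx0 hy0 ▸
      padicValNat_le_of_dvd (Nat.lcm_ne_zero hx0 hy0) h.orderOf_mul_dvd_lcm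
  have hge : padicValNat p (orderOf y) ≤ max (padicValNat p (orderOf x)) _ :=
    padicValNat_lcm (p := p) hx0 hxy0 ▸
      padicValNat_le_of_dvd (Nat.lcm_ne_zero hx0 hxy0) h.orderOf_dvd_lcm_mul
  omega

theorem stmt1_general (g : ℕ) (z : Fin g → ℂ)
    (e : Fin g → ℕ) (he : ∀ i, e i = padicValNat 2 (orderOf (z i)))
    (T : ℕ) (hT : 0 < T)
    (l : Fin g → ℂ) (hl : ∀ i, (l i) ^ T = 1)
    (w : Fin g → ℂ) (hw : ∀ i, w i = l i * z i)
    (hlt : ∀ i, padicValNat 2 T < e i) :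
    ∀ i, padicValNat 2 (orderOf (w i)) = e i := by
  intro i
  rw [hw, he]
  refine (Commute.all _ _).padicValNat_orderOf_mul_eq_right
    (isOfFinOrder_iff_pow_eq_one.2 ⟨T, hT, hl i⟩) ?_
  calc padicValNat 2 (orderOf (l i))
      ≤ padicValNat 2 T := padicValNat_le_of_dvd hT.ne' (orderOf_dvd_of_pow_eq_one (hl i))
    _ < padicValNat 2 (orderOf (z i)) := he i ▸ hlt i

/-- Lemma 4.8: a twist of order `T` with `ord₂ T < min eᵢ` does not change the
2-valuation vector of the normalized Weil numbers. -/
theorem stmt1 (g : ℕ) (hg : 0 < g) (z : Fin g → ℂ)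
    (hz : ∀ i, IsOfFinOrder (z i))
    (e : Fin g → ℕ) (he : ∀ i, e i = padicValNat 2 (orderOf (z i)))
    (T : ℕ) (hT : 0 < T)
    (l : Fin g → ℂ) (hl : ∀ i, (l i) ^ T = 1)
    (w : Fin g → ℂ) (hw : ∀ i, w i = l i * z i)
    (hlt : ∀ i, padicValNat 2 T < e i) :
    ∀ i, padicValNat 2 (orderOf (w i)) = e i :=
  stmt1_general g z e he T hT l hl w hw hlt
end

section
/- Let r and g be positive integers and let z, w, λ : Fin g → ℂ satisfy w i = λ i * z i for all i. Suppose M is the least positive integer m such that r·m is even and either (z i)^m = −1 for all i or (z i)^m = 1 for all i, and that moreover (z i)^M = −1 for all i. Let T be a positive integer with (λ i)^T = 1 for all i and padicValNat 2 T ≤ padicValNat 2 M. Let N be the least positive integer m such that r·m is even and either (w i)^m = −1 for all i or (w i)^m = 1 for all i. Then (w i)^N = −1 for all i. -/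
/-!
If the twist had parity `-1`, i.e. `w i ^ N = 1` for all `i`, take `k` the odd part of `T`.
Since `ord₂ T ≤ ord₂ M`, `T ∣ M * k`, so the twisting factors `l i` die in exponent `M * k`
while `z i ^ (M * k) = (-1) ^ k = -1`; hence `w i ^ (M * k) = -1`. Reducing `M * k` modulo `N`
gives a positive exponent `s < N` with `r * s` even and `w i ^ s = -1`, against the minimality
of `N`.
-/

theorem Nat.exists_not_dvd_and_dvd_mul_of_padicValNat_le {p T M : ℕ} (hp : p.Prime)
    (hT : T ≠ 0) (hTM : padicValNat p T ≤ padicValNat p M) :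
    ∃ k, ¬ p ∣ k ∧ T ∣ M * k := by
  refine ⟨ordCompl[p] T, Nat.not_dvd_ordCompl hp hT, ?_⟩
  conv_lhs => rw [← Nat.ordProj_mul_ordCompl_eq_self T p]
  refine mul_dvd_mul ?_ dvd_rfl
  rw [Nat.factorization_def T hp]
  exact (pow_dvd_pow p hTM).trans pow_padicValNat_dvd

theorem not_forall_pow_eq_neg_one_of_minimal {ι R : Type*} [Nonempty ι] [Monoid R]
    [HasDistribNeg R] (hR : (-1 : R) ≠ 1) {w : ι → R} {r N : ℕ} (hN_pos : 0 < N)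
    (hN_even : Even (r * N)) (hN_one : ∀ i, w i ^ N = 1)
    (hN_min : ∀ m : ℕ, 0 < m → Even (r * m) →
      ((∀ i, w i ^ m = -1) ∨ (∀ i, w i ^ m = 1)) → N ≤ m)
    {m : ℕ} (hm_even : Even (r * m)) : ¬ ∀ i, w i ^ m = -1 := by
  intro hm
  set s := m % N
  have hs : ∀ i, w i ^ s = -1 := fun i => (pow_eq_pow_mod m (hN_one i)).symm.trans (hm i)
  have hs_pos : 0 < s := by
    refine Nat.pos_of_ne_zero fun hs_zero => hR ?_
    obtain ⟨i⟩ := ‹Nonempty ι›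
    rw [← hs i, hs_zero, pow_zero]
  have hs_even : Even (r * s) := by
    have hsplit : r * m = r * N * (m / N) + r * s := by
      rw [mul_assoc, ← mul_add, Nat.div_add_mod]
    rw [hsplit] at hm_even
    exact (Nat.even_add.mp hm_even).mp (hN_even.mul_right _)
  exact (Nat.mod_lt m hN_pos).not_ge (hN_min s hs_pos hs_even (Or.inl hs))

theorem pow_mul_eq_neg_one_of_twist {ι R : Type*} [CommMonoid R] [HasDistribNeg R]
    {z w l : ι → R} (hw : ∀ i, w i = l i * z i) {M T k : ℕ} (hz : ∀ i, z i ^ M = -1)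
    (hl : ∀ i, l i ^ T = 1) (hk : Odd k) (hTk : T ∣ M * k) (i : ι) :
    w i ^ (M * k) = -1 := by
  obtain ⟨c, hc⟩ := hTk
  have hl_one : l i ^ (M * k) = 1 := by rw [hc, pow_mul, hl i, one_pow]
  rw [hw i, mul_pow, hl_one, one_mul, pow_mul, hz i, hk.neg_one_pow]

theorem stmt3_general (r g : ℕ)
    (z w l : Fin g → ℂ) (hw : ∀ i, w i = l i * z i)
    (M : ℕ) (hM_even : Even (r * M))
    (hM_par : ∀ i, z i ^ M = -1)
    (T : ℕ) (hT_pos : 0 < T) (hT : ∀ i, (l i) ^ T = 1)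
    (hT2 : padicValNat 2 T ≤ padicValNat 2 M)
    (N : ℕ) (hN_pos : 0 < N) (hN_even : Even (r * N))
    (hN_prop : (∀ i, w i ^ N = -1) ∨ (∀ i, w i ^ N = 1))
    (hN_min : ∀ m : ℕ, 0 < m → Even (r * m) →
      ((∀ i, w i ^ m = -1) ∨ (∀ i, w i ^ m = 1)) → N ≤ m) :
    ∀ i, w i ^ N = -1 := by
  intro i
  rcases hN_prop with h_neg | h_one
  · exact h_neg i
  obtain ⟨k, hk_not_dvd, hTk⟩ :=
    Nat.exists_not_dvd_and_dvd_mul_of_padicValNat_le Nat.prime_two hT_pos.ne' hT2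
  have hk_odd : Odd k := Nat.odd_iff.mpr (Nat.two_dvd_ne_zero.mp hk_not_dvd)
  have : Nonempty (Fin g) := ⟨i⟩
  refine absurd (pow_mul_eq_neg_one_of_twist hw hM_par hT hk_odd hTk)
    (not_forall_pow_eq_neg_one_of_minimal (by norm_num) hN_pos hN_even h_one hN_min ?_)
  rw [← mul_assoc]
  exact hM_even.mul_right k

/-- Corollary 4.11(1): if `A/K` has period `M` and parity `+1` and `A'/K` is a twist
of order `T` with `ord₂ T ≤ ord₂ M`, then `A'/K` also has parity `+1`. -/
theorem stmt3 (r g : ℕ) (hr : 0 < r) (hg : 0 < g)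
    (z w l : Fin g → ℂ) (hw : ∀ i, w i = l i * z i)
    (M : ℕ) (hM_pos : 0 < M) (hM_even : Even (r * M))
    (hM_prop : (∀ i, z i ^ M = -1) ∨ (∀ i, z i ^ M = 1))
    (hM_min : ∀ m : ℕ, 0 < m → Even (r * m) →
      ((∀ i, z i ^ m = -1) ∨ (∀ i, z i ^ m = 1)) → M ≤ m)
    (hM_par : ∀ i, z i ^ M = -1)
    (T : ℕ) (hT_pos : 0 < T) (hT : ∀ i, (l i) ^ T = 1)
    (hT2 : padicValNat 2 T ≤ padicValNat 2 M)
    (N : ℕ) (hN_pos : 0 < N) (hN_even : Even (r * N))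
    (hN_prop : (∀ i, w i ^ N = -1) ∨ (∀ i, w i ^ N = 1))
    (hN_min : ∀ m : ℕ, 0 < m → Even (r * m) →
      ((∀ i, w i ^ m = -1) ∨ (∀ i, w i ^ m = 1)) → N ≤ m) :
    ∀ i, w i ^ N = -1 :=
  stmt3_general r g z w l hw M hM_even hM_par T hT_pos hT hT2 N hN_pos hN_even hN_prop hN_min
end

section
/- Let r and g be positive integers and let z, w, λ : Fin g → ℂ satisfy w i = λ i * z i for all i. Suppose M is the least positive integer m such that r·m is even and either (z i)^m = −1 for all i or (z i)^m = 1 for all i, with (z i)^M = −1 for all i; and suppose N is the least positive integer m such that r·m is even and either (w i)^m = −1 for all i or (w i)^m = 1 for all i, with (w i)^N = 1 for all i. If T is a positive integer with (λ i)^T = 1 for all i, then T is even. -/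
/-! If `T` were odd, then `w i ^ (M * T) = (l i ^ T) ^ M * (z i ^ M) ^ T = -1` for all `i`,
while `w i ^ N = 1`. By Bézout, `w i ^ gcd N (M * T)` is then the same sign `±1` for every `i`,
and `r * gcd N (M * T)` is even, so minimality of `N` forces `N ∣ M * T` and hence
`w i ^ (M * T) = 1`, a contradiction. -/

theorem pow_gcd_eq_zpow_gcdB {G₀ : Type*} [GroupWithZero G₀] {x y : G₀} {a b : ℕ}
    (hx : x ≠ 0) (ha : x ^ a = 1) (hb : x ^ b = y) : x ^ a.gcd b = y ^ a.gcdB b := by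
  rw [← zpow_natCast, Nat.gcd_eq_gcd_ab, zpow_add₀ hx, zpow_mul, zpow_mul, zpow_natCast,
    zpow_natCast, ha, hb, one_zpow, one_mul]

theorem pow_gcd_eq_neg_one_or_one {ι K : Type*} [DivisionRing K] {w : ι → K} {a b : ℕ}
    (ha_pos : 0 < a) (ha : ∀ i, w i ^ a = 1) (hb : ∀ i, w i ^ b = -1) :
    (∀ i, w i ^ a.gcd b = -1) ∨ (∀ i, w i ^ a.gcd b = 1) := by
  have hw : ∀ i, w i ≠ 0 := fun i h0 => by simpa [h0, ha_pos.ne'] using ha i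
  simp only [fun i => pow_gcd_eq_zpow_gcdB (hw i) (ha i) (hb i)]
  rcases Int.even_or_odd (a.gcdB b) with h | h
  · exact Or.inr fun _ => h.neg_one_zpow
  · exact Or.inl fun _ => h.neg_one_zpow

theorem Nat.even_mul_gcd {r a b : ℕ} (ha : Even (r * a)) (hb : Even (r * b)) :
    Even (r * a.gcd b) := by
  rcases Nat.even_or_odd r with hr | hr
  · exact hr.mul_right _
  · have ha' := (Nat.even_mul.mp ha).resolve_left (Nat.not_even_iff_odd.mpr hr)
    have hb' := (Nat.even_mul.mp hb).resolve_left (Nat.not_even_iff_odd.mpr hr)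
    exact (even_iff_two_dvd.mpr (Nat.dvd_gcd ha'.two_dvd hb'.two_dvd)).mul_left r

theorem stmt5_general (r g : ℕ) (hg : 0 < g)
    (z w l : Fin g → ℂ) (hw : ∀ i, w i = l i * z i)
    (M : ℕ) (hM_even : Even (r * M))
    (hM_par : ∀ i, z i ^ M = -1)
    (N : ℕ) (hN_pos : 0 < N) (hN_even : Even (r * N))
    (hN_min : ∀ m : ℕ, 0 < m → Even (r * m) →
      ((∀ i, w i ^ m = -1) ∨ (∀ i, w i ^ m = 1)) → N ≤ m)
    (hN_par : ∀ i, w i ^ N = 1)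
    (T : ℕ) (hT : ∀ i, (l i) ^ T = 1) :
    Even T := by
  by_contra hT_odd
  rw [Nat.not_even_iff_odd] at hT_odd
  have hwMT : ∀ i, w i ^ (M * T) = -1 := fun i => by
    have hl : l i ^ (M * T) = 1 := by rw [mul_comm, pow_mul, hT i, one_pow]
    have hz : z i ^ (M * T) = -1 := by rw [pow_mul, hM_par i, hT_odd.neg_one_pow]
    rw [hw i, mul_pow, hl, hz, one_mul]
  have hrMT : Even (r * (M * T)) := by rw [← mul_assoc]; exact hM_even.mul_right T
  have hN_le_gcd : N ≤ N.gcd (M * T) :=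
    hN_min _ (Nat.gcd_pos_of_pos_left _ hN_pos) (Nat.even_mul_gcd hN_even hrMT)
      (pow_gcd_eq_neg_one_or_one hN_pos hN_par hwMT)
  obtain ⟨k, hk⟩ : N ∣ M * T :=
    Nat.gcd_eq_left_iff_dvd.mp (le_antisymm (Nat.gcd_le_left _ hN_pos) hN_le_gcd)
  have hw_one : w ⟨0, hg⟩ ^ (M * T) = 1 := by rw [hk, pow_mul, hN_par, one_pow]
  exact (by norm_num : (-1 : ℂ) ≠ 1) ((hwMT _).symm.trans hw_one)

/-- Corollary 4.11(3): if `A/K` and its twist `A'/K` have different parities, then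
the order `T` of the twist is even. -/
theorem stmt5 (r g : ℕ) (hr : 0 < r) (hg : 0 < g)
    (z w l : Fin g → ℂ) (hw : ∀ i, w i = l i * z i)
    (M : ℕ) (hM_pos : 0 < M) (hM_even : Even (r * M))
    (hM_prop : (∀ i, z i ^ M = -1) ∨ (∀ i, z i ^ M = 1))
    (hM_min : ∀ m : ℕ, 0 < m → Even (r * m) →
      ((∀ i, z i ^ m = -1) ∨ (∀ i, z i ^ m = 1)) → M ≤ m)
    (hM_par : ∀ i, z i ^ M = -1)
    (N : ℕ) (hN_pos : 0 < N) (hN_even : Even (r * N))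
    (hN_prop : (∀ i, w i ^ N = -1) ∨ (∀ i, w i ^ N = 1))
    (hN_min : ∀ m : ℕ, 0 < m → Even (r * m) →
      ((∀ i, w i ^ m = -1) ∨ (∀ i, w i ^ m = 1)) → N ≤ m)
    (hN_par : ∀ i, w i ^ N = 1)
    (T : ℕ) (hT_pos : 0 < T) (hT : ∀ i, (l i) ^ T = 1) :
    Even T :=
  stmt5_general r g hg z w l hw M hM_even hM_par N hN_pos hN_even hN_min hN_par T hT
end

section
/- Let s be a positive integer with s ≡ 0 (mod 4), and let p be a prime with p ≡ −1 (mod s). Let F be a finite field with p² elements. Then the number of points of the projective plane over F lying on the Fermat curve x^s + y^s + z^s = 0 — i.e. the cardinality of the set of points of the projectivization of F³ represented by nonzero vectors (x,y,z) with x^s + y^s + z^s = 0 — equals p² + 1 + (s−1)(s−2)·p. -/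
/-!
Write `s * d = p + 1`, so that `e := (p - 1) * d = (p² - 1) / s` and the nonzero `s`-th powers of
`F` are the `a` with `a ^ e = 1`, i.e. with `a ^ (p - 1)` a `d`-th root of unity; as `e` is even,
`-1` is one of them. Counting the affine cone fibre by fibre over `x ↦ x ^ s`, the curve has `3 * s` points
with a zero coordinate and `s² * M` others, where `M` counts the `a` with `a` and `1 + a` both
nonzero `s`-th powers. All `a ∈ 𝔽_p \ {0, -1}` qualify, giving `p - 2`. For `a ∉ 𝔽_p`, the Frobenius identity
`(1 + a) ^ p = 1 + a ^ p` turns `a ↦ (a ^ (p - 1), (1 + a) ^ (p - 1))` into a bijection onto pairs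
of distinct nontrivial `d`-th roots of unity, which contribute `(d - 1) * (d - 2)`.
-/

open Finset

namespace Projectivization

variable {k V : Type*} [DivisionRing k] [AddCommGroup V] [Module k V]

theorem natCard_subtype_mk_mul_natCard_units (P : V → Prop)
    (hP : ∀ (c : kˣ) (v : V), P v → P (c • v)) :
    Nat.card {x : Projectivization k V // ∃ (v : V) (hv : v ≠ 0), P v ∧ x = mk k v hv} *
      Nat.card kˣ = Nat.card {v : V // v ≠ 0 ∧ P v} := by
  have hmk (v : V) (hv : v ≠ 0) :
      (∃ (w : V) (hw : w ≠ 0), P w ∧ mk k v hv = mk k w hw) ↔ P v := by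
    refine ⟨?_, fun h => ⟨v, hv, h, rfl⟩⟩
    rintro ⟨w, hw, h, hvw⟩
    obtain ⟨c, rfl⟩ := (mk_eq_mk_iff k v w hv hw).1 hvw
    exact hP c w h
  rw [← Nat.card_prod]
  refine Nat.card_congr (Equiv.prodSubtypeFstEquivSubtypeProd.symm.trans
    (((nonZeroEquivProjectivizationProdUnits k V).subtypeEquiv fun w => ?_).symm.trans
      (Equiv.subtypeSubtypeEquivSubtypeInter (· ≠ 0) P)))
  exact (hmk w.1 w.2).symm

end Projectivization

theorem Fintype.sum_comp_eq_sum_card_filter_smul {ι κ M : Type*} [Fintype ι] [Fintype κ]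
    [DecidableEq κ] [AddCommMonoid M] (g : ι → κ) (h : κ → M) :
    ∑ z, h (g z) = ∑ a, #{z | g z = a} • h a := by
  rw [← Finset.sum_fiberwise univ g]
  refine Finset.sum_congr rfl fun a _ => ?_
  rw [Finset.sum_congr rfl fun z hz => by rw [(mem_filter.1 hz).2], sum_const]

namespace FiniteField

variable {F : Type*} [Field F] [Fintype F]

theorem exists_isPrimitiveRoot_of_dvd_card_sub_one {n : ℕ} (hn : n ∣ Fintype.card F - 1) :
    ∃ ζ : F, IsPrimitiveRoot ζ n := by
  classical
  obtain ⟨g, hg⟩ := IsCyclic.exists_ofOrder_eq_natCard (α := Fˣ)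
  rw [Nat.card_eq_fintype_card, Fintype.card_units] at hg
  obtain ⟨m, hm⟩ := hn
  have hm0 : 0 < m := Nat.pos_of_dvd_of_pos (Dvd.intro_left n hm.symm)
    (Nat.sub_pos_of_lt Fintype.one_lt_card)
  refine ⟨(g : F) ^ m, ?_⟩
  have := (IsPrimitiveRoot.coe_units_iff.2 (hg ▸ IsPrimitiveRoot.orderOf g)).pow_of_dvd hm0.ne'
    (Dvd.intro_left n hm.symm)
  rwa [hm, Nat.mul_div_cancel _ hm0] at this

theorem exists_pow_eq_iff_pow_eq_one {n e : ℕ} (hne : n * e = Fintype.card F - 1) {a : F}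
    (ha : a ≠ 0) : (∃ x, x ^ n = a) ↔ a ^ e = 1 := by
  have hq : 0 < Fintype.card F - 1 := Nat.sub_pos_of_lt Fintype.one_lt_card
  have hn : 0 < n := Nat.pos_of_dvd_of_pos (Dvd.intro e hne) hq
  have he : 0 < e := Nat.pos_of_dvd_of_pos (Dvd.intro_left n hne) hq
  constructor
  · rintro ⟨x, rfl⟩
    rw [← pow_mul, hne]
    exact pow_card_sub_one_eq_one x (by rintro rfl; simp [hn.ne'] at ha)
  · intro h
    obtain ⟨ζ, hζ⟩ := exists_isPrimitiveRoot_of_dvd_card_sub_one (F := F) dvd_rfl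
    have : NeZero (Fintype.card F - 1) := ⟨hq.ne'⟩
    obtain ⟨k, -, rfl⟩ := hζ.eq_pow_of_pow_eq_one (pow_card_sub_one_eq_one a ha)
    rw [← pow_mul, hζ.pow_eq_one_iff_dvd, ← hne] at h
    obtain ⟨j, rfl⟩ := (Nat.mul_dvd_mul_iff_right he).1 h
    exact ⟨ζ ^ j, by rw [← pow_mul, mul_comm]⟩

variable [DecidableEq F]

theorem card_filter_pow_eq {n e : ℕ} (hne : n * e = Fintype.card F - 1) {a : F} (ha : a ≠ 0) :
    #{x | x ^ n = a} = if a ^ e = 1 then n else 0 := by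
  split_ifs with h
  · obtain ⟨ζ, hζ⟩ := exists_isPrimitiveRoot_of_dvd_card_sub_one (Dvd.intro e hne)
    have hn : 0 < n := Nat.pos_of_dvd_of_pos (Dvd.intro e hne)
      (Nat.sub_pos_of_lt Fintype.one_lt_card)
    have : #{x | x ^ n = a} = Multiset.card (Polynomial.nthRoots n a) := by
      rw [← Multiset.toFinset_card_of_nodup (hζ.nthRoots_nodup ha)]
      congr 1
      ext x
      simp [Polynomial.mem_nthRoots hn]
    classical
    rw [this, hζ.card_nthRoots, if_pos ((exists_pow_eq_iff_pow_eq_one hne ha).2 h)]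
  · rw [card_eq_zero, filter_eq_empty_iff]
    exact fun x _ hx => h ((exists_pow_eq_iff_pow_eq_one hne ha).1 ⟨x, hx⟩)

end FiniteField

section FermatCount

variable {F : Type*} [Field F] [Fintype F] [DecidableEq F]

def fermatCount (s n : ℕ) (c : F) : ℕ := #{w : Fin n → F | ∑ i, w i ^ s = c}

variable {s : ℕ}

theorem fermatCount_one (c : F) : fermatCount s 1 c = #{x : F | x ^ s = c} := by
  simp only [fermatCount, Fin.sum_univ_one]
  exact card_equiv (Equiv.funUnique (Fin 1) F) (by simp)

theorem fermatCount_succ (n : ℕ) (c : F) :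
    fermatCount s (n + 1) c = ∑ z, fermatCount s n (c - z ^ s) := by
  simp only [fermatCount, card_filter]
  rw [← (Fin.consEquiv fun _ => F).sum_comp, Fintype.sum_prod_type]
  refine sum_congr rfl fun z _ => sum_congr rfl fun w _ => ?_
  simp [Fin.sum_univ_succ, eq_sub_iff_add_eq']

theorem fermatCount_pow_mul {t : F} (ht : t ≠ 0) (n : ℕ) (c : F) :
    fermatCount s n (t ^ s * c) = fermatCount s n c := by
  refine card_nbij' (fun w => t⁻¹ • w) (fun w => t • w) ?_ ?_ ?_ ?_
  · intro w hw
    simp_all [mul_pow, ← mul_sum]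
  · intro w hw
    simp_all [mul_pow, ← mul_sum]
  · intro w _; simp [smul_smul, ht]
  · intro w _; simp [smul_smul, ht]

theorem fermatCount_succ_zero (hs : s ≠ 0) (n : ℕ) :
    fermatCount s (n + 1) (0 : F) =
      fermatCount s n (0 : F) + (Fintype.card F - 1) * fermatCount s n (-1 : F) := by
  rw [fermatCount_succ, ← add_sum_erase _ _ (mem_univ 0), sum_congr rfl fun z hz => by
    rw [zero_sub, ← mul_neg_one, fermatCount_pow_mul (ne_of_mem_erase hz)], sum_const,
    card_erase_of_mem (mem_univ _), card_univ, smul_eq_mul]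
  simp [hs]

theorem card_filter_pow_eq_zero (hs : s ≠ 0) : #{x : F | x ^ s = 0} = 1 := by
  simp [pow_eq_zero_iff hs, filter_eq']

theorem fermatCount_two {e : ℕ} (hse : s * e = Fintype.card F - 1) {c : F} (hc0 : c ≠ 0)
    (hc : c ^ e = 1) :
    fermatCount s 2 c = 2 * s + s ^ 2 * #{a : F | a ^ e = 1 ∧ (c - a) ^ e = 1} := by
  have hq : s * e ≠ 0 := hse ▸ (Nat.sub_pos_of_lt Fintype.one_lt_card).ne'
  have hs0 : s ≠ 0 := left_ne_zero_of_mul hq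
  have he : e ≠ 0 := right_ne_zero_of_mul hq
  have hterm (a : F) : #{x : F | x ^ s = a} * #{x : F | x ^ s = c - a} =
      (if a = 0 then s else 0) + (if a = c then s else 0) +
        if a ^ e = 1 ∧ (c - a) ^ e = 1 then s ^ 2 else 0 := by
    by_cases ha : a = 0
    · subst ha
      rw [card_filter_pow_eq_zero hs0, sub_zero, FiniteField.card_filter_pow_eq hse hc0]
      simp [hc, hc0.symm, he]
    by_cases hac : a = c
    · subst hac
      rw [sub_self, card_filter_pow_eq_zero hs0, FiniteField.card_filter_pow_eq hse hc0]
      simp [hc, ha, zero_pow he]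
    rw [FiniteField.card_filter_pow_eq hse ha,
      FiniteField.card_filter_pow_eq hse (sub_ne_zero.2 (Ne.symm hac))]
    split_ifs <;> simp_all [sq]
  rw [fermatCount_succ,
    Fintype.sum_comp_eq_sum_card_filter_smul (· ^ s) fun a => fermatCount s 1 (c - a)]
  simp only [fermatCount_one, smul_eq_mul, hterm, sum_add_distrib, sum_ite_eq', mem_univ,
    if_true, ← sum_filter, sum_const, smul_eq_mul]
  ring

end FermatCount

section Frobenius

variable {K : Type*} [Field K] {p : ℕ} [Fact p.Prime] [CharP K p]

theorem one_add_pow_sub_one_mul (a : K) :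
    (1 + a) ^ (p - 1) * (1 + a) = 1 + a ^ (p - 1) * a := by
  have hp : p ≠ 0 := (Fact.out : p.Prime).ne_zero
  rw [pow_sub_one_mul hp, pow_sub_one_mul hp, add_pow_char, one_pow]

theorem div_sub_pow_char {a b : K} (ha : a ^ (p + 1) = 1) (hb : b ^ (p + 1) = 1) :
    ((a - 1) / (a - b)) ^ p = b * ((a - 1) / (a - b)) := by
  have hinv {x : K} (hx : x ^ (p + 1) = 1) : x ^ p = x⁻¹ :=
    eq_inv_of_mul_eq_one_left (by rwa [← pow_succ])
  have hne {x : K} (hx : x ^ (p + 1) = 1) : x ≠ 0 := by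
    rintro rfl; simp at hx
  by_cases hab : a = b
  · simp [hab, (Fact.out : p.Prime).ne_zero]
  rw [div_pow, sub_pow_char, sub_pow_char, one_pow, hinv ha, hinv hb]
  field_simp [hne ha, hne hb, sub_ne_zero.2 hab, sub_ne_zero.2 (Ne.symm hab)]
  ring

theorem pow_sub_one_div_sub_eq {ζ ξ : K} (hζ : ζ ^ (p + 1) = 1) (hξ : ξ ^ (p + 1) = 1)
    (hζξ : ζ ≠ ξ) (hζ1 : ζ ≠ 1) (hξ1 : ξ ≠ 1) :
    ((ξ - 1) / (ζ - ξ)) ^ (p - 1) = ζ ∧ (1 + (ξ - 1) / (ζ - ξ)) ^ (p - 1) = ξ := by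
  have hp : p ≠ 0 := (Fact.out : p.Prime).ne_zero
  have hsub : ζ - ξ ≠ 0 := sub_ne_zero.2 hζξ
  set u := (ξ - 1) / (ζ - ξ) with hu
  have hu0 : u ≠ 0 := div_ne_zero (sub_ne_zero.2 hξ1) hsub
  have h1u : 1 + u = (ζ - 1) / (ζ - ξ) := by rw [hu]; field_simp; ring
  have h1u0 : 1 + u ≠ 0 := h1u ▸ div_ne_zero (sub_ne_zero.2 hζ1) hsub
  have hξ' : (1 + u) ^ (p - 1) = ξ := by
    refine mul_right_cancel₀ h1u0 ?_
    rw [pow_sub_one_mul hp, h1u, div_sub_pow_char hζ hξ]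
  refine ⟨mul_right_cancel₀ hu0 ?_, hξ'⟩
  have := one_add_pow_sub_one_mul (p := p) u
  rw [hξ'] at this
  have hrel : (ζ - ξ) * u = ξ - 1 := by rw [hu]; field_simp
  linear_combination -this - hrel

variable [Fintype K] [DecidableEq K]

theorem card_filter_pow_sub_one_ne_one {d : ℕ} (hd : d ∣ p + 1) :
    #{a : K | a ^ (p - 1) ≠ 1 ∧ (a ^ (p - 1)) ^ d = 1 ∧ ((1 + a) ^ (p - 1)) ^ d = 1} =
      #(({ζ : K | ζ ^ d = 1} : Finset K).erase 1).offDiag := by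
  have hp1 : p - 1 ≠ 0 := (Nat.sub_pos_of_lt (Fact.out : p.Prime).one_lt).ne'
  have hd0 : d ≠ 0 := by rintro rfl; simp at hd
  have hroot {ζ : K} (h : ζ ^ d = 1) : ζ ^ (p + 1) = 1 := by
    obtain ⟨m, hm⟩ := hd; rw [hm, pow_mul, h, one_pow]
  have hne {a : K} (ha : a ^ (p - 1) ≠ 1) : a ^ (p - 1) ≠ (1 + a) ^ (p - 1) := fun h => by
    have hrel := one_add_pow_sub_one_mul (p := p) a
    rw [← h] at hrel
    exact ha (by linear_combination hrel)
  -- `(1 + a) ^ p = 1 + a ^ p` reads `ξ * (1 + a) = 1 + ζ * a`, which recovers `a` from `(ζ, ξ)`.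
  refine card_nbij' (fun a => (a ^ (p - 1), (1 + a) ^ (p - 1)))
    (fun x => (x.2 - 1) / (x.1 - x.2)) ?_ ?_ ?_ ?_
  · intro a ha
    simp only [mem_coe, mem_filter, mem_univ, true_and] at ha
    obtain ⟨hζ1, hζ, hξ⟩ := ha
    have hrel := one_add_pow_sub_one_mul (p := p) a
    have ha0 : a ≠ 0 := by rintro rfl; simp [zero_pow hp1, hd0] at hζ
    simp only [mem_coe, mem_offDiag, mem_erase, mem_filter, mem_univ, true_and]
    refine ⟨⟨hζ1, hζ⟩, ⟨fun h => hζ1 ?_, hξ⟩, hne hζ1⟩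
    rw [h] at hrel
    exact mul_left_cancel₀ ha0 (by linear_combination -hrel)
  · rintro ⟨ζ, ξ⟩ h
    simp only [mem_coe, mem_offDiag, mem_erase, mem_filter, mem_univ, true_and] at h
    obtain ⟨⟨hζ1, hζ⟩, ⟨hξ1, hξ⟩, hζξ⟩ := h
    obtain ⟨h1, h2⟩ := pow_sub_one_div_sub_eq (hroot hζ) (hroot hξ) hζξ hζ1 hξ1
    simp only [mem_coe, mem_filter, mem_univ, true_and, h1, h2]
    exact ⟨hζ1, hζ, hξ⟩
  · intro a ha
    simp only [mem_coe, mem_filter, mem_univ, true_and] at ha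
    rw [div_eq_iff (sub_ne_zero.2 (hne ha.1))]
    linear_combination one_add_pow_sub_one_mul (p := p) a
  · rintro ⟨ζ, ξ⟩ h
    simp only [mem_coe, mem_offDiag, mem_erase, mem_filter, mem_univ, true_and] at h
    obtain ⟨⟨hζ1, hζ⟩, ⟨hξ1, hξ⟩, hζξ⟩ := h
    obtain ⟨h1, h2⟩ := pow_sub_one_div_sub_eq (hroot hζ) (hroot hξ) hζξ hζ1 hξ1
    simp only [h1, h2]

theorem card_filter_pow_sub_one_pow_eq_one {d : ℕ} (hd : d ∣ p + 1) :
    #{a : K | (a ^ (p - 1)) ^ d = 1 ∧ ((1 + a) ^ (p - 1)) ^ d = 1} =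
      #{a : K | a ^ (p - 1) = 1} - 1 + #(({ζ : K | ζ ^ d = 1} : Finset K).erase 1).offDiag := by
  have hp : p ≠ 0 := (Fact.out : p.Prime).ne_zero
  have hp1 : p - 1 ≠ 0 := (Nat.sub_pos_of_lt (Fact.out : p.Prime).one_lt).ne'
  have hd0 : d ≠ 0 := by rintro rfl; simp at hd
  have hneg : (-1 : K) ^ (p - 1) = 1 :=
    mul_left_cancel₀ (neg_ne_zero.2 one_ne_zero)
      (by rw [← pow_succ', Nat.sub_add_cancel (Nat.one_le_iff_ne_zero.2 hp), neg_one_pow_char K p,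
        mul_one])
  rw [← card_filter_add_card_filter_not (p := fun a : K => a ^ (p - 1) = 1), filter_filter,
    filter_filter, ← card_filter_pow_sub_one_ne_one hd,
    ← card_erase_of_mem (s := {a : K | a ^ (p - 1) = 1}) (a := -1) (by simp [hneg])]
  congr 2
  · ext a
    simp only [mem_filter, mem_univ, true_and, mem_erase]
    constructor
    · rintro ⟨⟨-, h⟩, ha⟩
      refine ⟨fun h' => ?_, ha⟩
      simp [h', zero_pow hp1, hd0] at h
    · rintro ⟨ha1, ha⟩
      have h1a : 1 + a ≠ 0 := fun h => ha1 (by linear_combination h)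
      have : (1 + a) ^ (p - 1) = 1 := mul_right_cancel₀ h1a (by
        rw [one_add_pow_sub_one_mul, ha]; ring)
      simp [ha, this]
  · ext a
    simp only [mem_filter, mem_univ, true_and]
    tauto

end Frobenius

section FermatCurve

variable {F : Type*} [Field F] [Fintype F] [DecidableEq F]

theorem natCard_fermat_nonzero (s : ℕ) (hs : s ≠ 0) :
    Nat.card {v : Fin 3 → F // v ≠ 0 ∧ v 0 ^ s + v 1 ^ s + v 2 ^ s = 0} =
      fermatCount s 3 (0 : F) - 1 := by
  rw [Nat.card_eq_fintype_card, Fintype.card_subtype, fermatCount, ← card_erase_of_mem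
    (s := {w : Fin 3 → F | ∑ i, w i ^ s = 0}) (a := 0) (by simp [hs])]
  congr 1
  ext v
  simp [Fin.sum_univ_three, and_comm]

theorem natCard_fermatCurve {s e : ℕ} (hse : s * e = Fintype.card F - 1)
    (hneg : (-1 : F) ^ e = 1) :
    Nat.card {P : Projectivization F (Fin 3 → F) //
        ∃ (v : Fin 3 → F) (hv : v ≠ 0),
          v 0 ^ s + v 1 ^ s + v 2 ^ s = 0 ∧ P = Projectivization.mk F v hv} =
      3 * s + s ^ 2 * #{a : F | a ^ e = 1 ∧ (-1 - a) ^ e = 1} := by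
  have hq : s * e ≠ 0 := hse ▸ (Nat.sub_pos_of_lt Fintype.one_lt_card).ne'
  have hs : s ≠ 0 := left_ne_zero_of_mul hq
  have hcount := Projectivization.natCard_subtype_mk_mul_natCard_units (k := F)
    (P := fun v : Fin 3 → F => v 0 ^ s + v 1 ^ s + v 2 ^ s = 0) fun c v h => by
      simp only [Pi.smul_apply, Units.smul_def, smul_eq_mul, mul_pow]
      linear_combination (c : F) ^ s * h
  rw [Nat.card_units, Nat.card_eq_fintype_card (α := F), natCard_fermat_nonzero s hs,
    fermatCount_succ_zero hs, fermatCount_succ_zero hs, fermatCount_one, fermatCount_one,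
    card_filter_pow_eq_zero hs, FiniteField.card_filter_pow_eq hse (neg_ne_zero.2 one_ne_zero),
    if_pos hneg, fermatCount_two hse (neg_ne_zero.2 one_ne_zero) hneg, ← hse] at hcount
  refine Nat.eq_of_mul_eq_mul_right (Nat.pos_of_ne_zero hq) ?_
  rw [hcount]
  ring_nf
  omega

end FermatCurve

theorem natCard_fermatCurve_of_card_eq_sq {F : Type*} [Field F] [Fintype F] {p s d : ℕ}
    [Fact p.Prime] [CharP F p] (hodd : Odd p) (hsd : s * d = p + 1)
    (hF : Fintype.card F = p ^ 2) :
    Nat.card {P : Projectivization F (Fin 3 → F) //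
        ∃ (v : Fin 3 → F) (hv : v ≠ 0),
          v 0 ^ s + v 1 ^ s + v 2 ^ s = 0 ∧ P = Projectivization.mk F v hv} =
      3 * s + s ^ 2 * (p - 2 + (d - 1) * (d - 2)) := by
  classical
  have hp : 1 ≤ p := hodd.pos
  have hq : (p - 1) * (p + 1) = Fintype.card F - 1 := by
    rw [hF]; zify [hp, Nat.one_le_pow 2 p hp]; ring
  have heven : Even ((p - 1) * d) := (Nat.Odd.sub_odd hodd odd_one).mul_right d
  rw [natCard_fermatCurve (by rw [mul_left_comm, hsd, hq]) heven.neg_one_pow]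
  have hM : #{a : F | a ^ ((p - 1) * d) = 1 ∧ (-1 - a) ^ ((p - 1) * d) = 1} =
      #{a : F | (a ^ (p - 1)) ^ d = 1 ∧ ((1 + a) ^ (p - 1)) ^ d = 1} := by
    refine congrArg card (filter_congr fun a _ => ?_)
    rw [show -1 - a = -(1 + a) by ring, heven.neg_pow, pow_mul, pow_mul]
  have hFp : #{a : F | a ^ (p - 1) = 1} = p - 1 := by
    simp [FiniteField.card_filter_pow_eq hq one_ne_zero]
  have hμ : #{ζ : F | ζ ^ d = 1} = d := by
    simp [FiniteField.card_filter_pow_eq (n := d) (e := (p - 1) * s) (by rw [← hq, ← hsd]; ring)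
      one_ne_zero]
  rw [hM, card_filter_pow_sub_one_pow_eq_one (Dvd.intro_left s hsd), hFp, offDiag_card,
    card_erase_of_mem (by simp), hμ, ← Nat.mul_sub_one, Nat.sub_sub, Nat.sub_sub]

theorem fermat_count_identity {p s d : ℕ} (hp : 2 ≤ p) (hs : 2 ≤ s) (hsd : s * d = p + 1) :
    3 * s + s ^ 2 * (p - 2 + (d - 1) * (d - 2)) = p ^ 2 + 1 + (s - 1) * (s - 2) * p := by
  have hsd' : (s * d : ℤ) = p + 1 := by exact_mod_cast hsd
  -- `d = 1` is split off since then `d - 2` truncates.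
  obtain rfl | hd : d = 1 ∨ 2 ≤ d := by
    have : d ≠ 0 := by rintro rfl; simp at hsd
    omega
  · zify [hp, hs, (by omega : 1 ≤ s)] at hsd' ⊢
    linear_combination ((p : ℤ) + 1 - 2 * s) * hsd'
  · zify [hp, hs, (by omega : 1 ≤ s), (by omega : 1 ≤ d), (by omega : 2 ≤ d)]
    linear_combination ((s : ℤ) * d + p + 1 - 3 * s) * hsd'

/-- Proposition 5.6 (maximality claim): for `s ≡ 0 mod 4` and a prime
`p ≡ -1 mod s`, the Fermat curve `x^s + y^s + z^s = 0` is maximal over `𝔽_{p²}`,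
i.e. its number of points in the projective plane over a field with `p²` elements
is `p² + 1 + (s-1)(s-2)p`. -/
theorem stmt9 (s : ℕ) (hs_pos : 0 < s) (hs4 : 4 ∣ s)
    (p : ℕ) (hp : p.Prime) (hps : (p : ZMod s) = -1)
    (F : Type*) [Field F] [Fintype F] (hF : Fintype.card F = p ^ 2) :
    Nat.card {P : Projectivization F (Fin 3 → F) //
        ∃ (v : Fin 3 → F) (hv : v ≠ 0),
          v 0 ^ s + v 1 ^ s + v 2 ^ s = 0 ∧ P = Projectivization.mk F v hv} =
      p ^ 2 + 1 + (s - 1) * (s - 2) * p := by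
  have : Fact p.Prime := ⟨hp⟩
  have : CharP F p := charP_of_card_eq_prime_pow hF
  obtain ⟨d, hd⟩ : s ∣ p + 1 :=
    (ZMod.natCast_eq_zero_iff _ _).1 (by push_cast; rw [hps, neg_add_cancel])
  have hs : 4 ≤ s := Nat.le_of_dvd hs_pos hs4
  have hodd : Odd p := hp.odd_of_ne_two fun h2 => by
    have := Nat.le_of_dvd (by omega) ⟨d, hd⟩; omega
  rw [natCard_fermatCurve_of_card_eq_sq hodd hd.symm hF,
    fermat_count_identity hp.two_le (by omega) hd.symm]
end

section
/- For every prime p > 5 with p ≡ 2 (mod 3), there exists t ∈ ZMod p such that t² + 4 ≠ 0 and t² + 4 is not a square in ZMod p. -/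
theorem isSquare_nsmul_of_forall_isSquare_sq_add {R : Type*} [Semiring R] {a : R}
    (h : ∀ t : R, IsSquare (t ^ 2 + a)) (n : ℕ) : IsSquare (n • a) := by
  induction n with
  | zero => simp
  | succ n ih =>
    obtain ⟨r, hr⟩ := ih
    rw [succ_nsmul, hr, ← sq]
    exact h r

/-- Were every `t ^ 2 + a` a square, the squares would be closed under adding `a`; since `a` generates
`ZMod p` additively, every element would be a square. -/
theorem ZMod.exists_not_isSquare_sq_add {p : ℕ} [Fact p.Prime] (hp : p ≠ 2) {a : ZMod p}
    (ha : a ≠ 0) : ∃ t : ZMod p, t ^ 2 + a ≠ 0 ∧ ¬ IsSquare (t ^ 2 + a) := by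
  by_contra! h
  have hsq : ∀ t : ZMod p, IsSquare (t ^ 2 + a) := fun t => by
    by_cases h0 : t ^ 2 + a = 0
    · exact h0 ▸ IsSquare.zero
    · exact h t h0
  have hall : ∀ x : ZMod p, IsSquare x := fun x => by
    have hx : (x * a⁻¹).val • a = x := by
      rw [nsmul_eq_mul, ZMod.natCast_zmod_val, mul_assoc, inv_mul_cancel₀ ha, mul_one]
    exact hx ▸ isSquare_nsmul_of_forall_isSquare_sq_add hsq _
  obtain ⟨b, hb⟩ := FiniteField.exists_nonsquare (F := ZMod p) (by rwa [ZMod.ringChar_zmod_n])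
  exact hb (hall b)

theorem stmt10_general (p : ℕ) (hp : p.Prime) (hp5 : 5 < p) :
    ∃ t : ZMod p, t ^ 2 + 4 ≠ 0 ∧ ¬ IsSquare (t ^ 2 + 4 : ZMod p) := by
  have : Fact p.Prime := ⟨hp⟩
  have h4 : (4 : ZMod p) ≠ 0 := by
    have : ((4 : ℕ) : ZMod p) ≠ 0 := by
      rw [Ne, ZMod.natCast_eq_zero_iff]
      exact fun hd => absurd (Nat.le_of_dvd (by norm_num) hd) (by omega)
    exact_mod_cast this
  exact ZMod.exists_not_isSquare_sq_add (by omega) h4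

/-- Claim in the proof of Proposition 7.3(2): for a prime `p > 5` with
`p ≡ 2 mod 3`, there is `t ∈ 𝔽_p` with `t² + 4` a nonzero non-square. -/
theorem stmt10 (p : ℕ) (hp : p.Prime) (hp5 : 5 < p) (hp3 : p % 3 = 2) :
    ∃ t : ZMod p, t ^ 2 + 4 ≠ 0 ∧ ¬ IsSquare (t ^ 2 + 4 : ZMod p) :=
  stmt10_general p hp hp5
end
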